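/- Let U, Ũ ⊆ ℝⁿ be open sets such that U is convex and the closure of U is compact and contained in Ũ. Let F : Ũ × ℝⁿ → ℝ be a horizontally C¹ family of asymmetric norms. Then there exists a constant C₁ > 0 such that |F_*(x₁, α) − F_*(x₂, α)| ≤ C₁‖α‖‖x₁ − x₂‖ for every α ∈ ℝⁿ and all x₁, x₂ ∈ U, where ‖·‖ is the Euclidean norm. -/

import Mathlib

open scoped RealInnerProductSpace

/-- `ℝⁿ` with the Euclidean inner product. -/
abbrev En (n : ℕ) := EuclideanSpace ℝ (Fin n)

/-- An asymmetric norm on `ℝⁿ`. -/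
def IsAsymNorm {n : ℕ} (F : En n → ℝ) : Prop :=
  (∀ y, 0 ≤ F y) ∧ (∀ y, F y = 0 ↔ y = 0) ∧
  (∀ l : ℝ, 0 < l → ∀ y, F (l • y) = l * F y) ∧
  (∀ y₁ y₂, F (y₁ + y₂) ≤ F y₁ + F y₂)

/-- A horizontally `C¹` family of asymmetric norms on `Ut × ℝⁿ`: `F` is continuous,
each `F x` is an asymmetric norm, and the partial derivative of `F` with respect to
the (horizontal) variable `x` exists everywhere and is continuous. -/
def HorizC1Family {n : ℕ} (Ut : Set (En n)) (F : En n → En n → ℝ) : Prop :=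
  ContinuousOn (fun p : En n × En n => F p.1 p.2) (Ut ×ˢ Set.univ) ∧
  (∀ x ∈ Ut, IsAsymNorm (F x)) ∧
  ∃ DF : En n × En n → (En n →L[ℝ] ℝ),
    (∀ x ∈ Ut, ∀ y, HasFDerivAt (fun x' => F x' y) (DF (x, y)) x) ∧
    ContinuousOn DF (Ut ×ˢ Set.univ)

/-- The family of dual asymmetric norms `F_*(x, α) = sup {⟨α, y⟩ : F x y ≤ 1}`. -/
noncomputable def dualNormF {n : ℕ} (F : En n → En n → ℝ) (x α : En n) : ℝ :=
  sSup ((fun y => ⟪α, y⟫) '' {y | F x y ≤ 1})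

/-!
On the compact convex set `closure U` the norms `F x` are uniformly coercive, `a ‖y‖ ≤ F x y`,
and by the mean value theorem `|F x₁ y - F x₂ y| ≤ M ‖x₁ - x₂‖ ‖y‖`. Hence
`F x₂ ≤ (1 + M ‖x₁ - x₂‖ / a) F x₁`, and passing to the unit balls shows
`F_*(x₁, α) ≤ (1 + M ‖x₁ - x₂‖ / a) F_*(x₂, α)`,
while `F_*(x₂, α) ≤ ‖α‖ / a`.
-/

open Set Metric

def PosHomogeneous {E : Type*} [SMul ℝ E] (f : E → ℝ) : Prop :=
  ∀ l : ℝ, 0 < l → ∀ y, f (l • y) = l * f y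

namespace PosHomogeneous

variable {E : Type*} [NormedAddCommGroup E] [NormedSpace ℝ E] {f g : E → ℝ}

theorem map_zero (hf : PosHomogeneous f) : f 0 = 0 := by
  have h := hf 2 two_pos 0
  rw [smul_zero] at h
  linarith

theorem sub (hf : PosHomogeneous f) (hg : PosHomogeneous g) :
    PosHomogeneous fun y => f y - g y := fun l hl y => by
  simp only [hf l hl, hg l hl, mul_sub]

theorem apply_eq_norm_mul (hf : PosHomogeneous f) {y : E} (hy : y ≠ 0) :
    f y = ‖y‖ * f (‖y‖⁻¹ • y) := by
  have hny : 0 < ‖y‖ := norm_pos_iff.mpr hy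
  rw [hf _ (inv_pos.mpr hny), mul_inv_cancel_left₀ hny.ne']

theorem mul_norm_le (hf : PosHomogeneous f) {a : ℝ} (h : ∀ u ∈ sphere (0 : E) 1, a ≤ f u)
    (y : E) : a * ‖y‖ ≤ f y := by
  rcases eq_or_ne y 0 with rfl | hy
  · simp [hf.map_zero]
  · rw [hf.apply_eq_norm_mul hy, mul_comm ‖y‖]
    exact mul_le_mul_of_nonneg_right
      (h _ (mem_sphere_zero_iff_norm.mpr (norm_smul_inv_norm hy))) (norm_nonneg y)

theorem abs_le_mul_norm (hf : PosHomogeneous f) {K : ℝ}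
    (h : ∀ u ∈ sphere (0 : E) 1, |f u| ≤ K) (y : E) : |f y| ≤ K * ‖y‖ := by
  rcases eq_or_ne y 0 with rfl | hy
  · simp [hf.map_zero]
  · rw [hf.apply_eq_norm_mul hy, abs_mul, abs_norm, mul_comm ‖y‖]
    exact mul_le_mul_of_nonneg_right
      (h _ (mem_sphere_zero_iff_norm.mpr (norm_smul_inv_norm hy))) (norm_nonneg y)

end PosHomogeneous

theorem IsAsymNorm.posHomogeneous {n : ℕ} {G : En n → ℝ} (hG : IsAsymNorm G) :
    PosHomogeneous G :=
  hG.2.2.1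

theorem IsAsymNorm.pos {n : ℕ} {G : En n → ℝ} (hG : IsAsymNorm G) {y : En n} (hy : y ≠ 0) :
    0 < G y :=
  (hG.1 y).lt_of_ne' (mt (hG.2.1 y).mp hy)

section AsymDual

variable {E : Type*} [NormedAddCommGroup E] [InnerProductSpace ℝ E] {G H : E → ℝ} {a : ℝ}

noncomputable def asymDual (G : E → ℝ) (α : E) : ℝ :=
  sSup ((fun y => ⟪α, y⟫) '' {y | G y ≤ 1})

theorem dualNormF_eq_asymDual {n : ℕ} (F : En n → En n → ℝ) (x α : En n) :
    dualNormF F x α = asymDual (F x) α :=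
  rfl

theorem inner_le_div_of_le_one (ha : 0 < a) (hG : ∀ y, a * ‖y‖ ≤ G y) (α : E) {y : E}
    (hy : G y ≤ 1) : ⟪α, y⟫ ≤ ‖α‖ / a := by
  have hy' : ‖y‖ ≤ 1 / a := by rw [le_div_iff₀ ha, mul_comm]; exact (hG y).trans hy
  calc ⟪α, y⟫ ≤ ‖α‖ * ‖y‖ := real_inner_le_norm α y
    _ ≤ ‖α‖ * (1 / a) := by gcongr
    _ = ‖α‖ / a := mul_one_div _ _

theorem bddAbove_inner_image (ha : 0 < a) (hG : ∀ y, a * ‖y‖ ≤ G y) (α : E) :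
    BddAbove ((fun y => ⟪α, y⟫) '' {y | G y ≤ 1}) :=
  ⟨‖α‖ / a, by rintro _ ⟨y, hy, rfl⟩; exact inner_le_div_of_le_one ha hG α hy⟩

theorem asymDual_le_div (ha : 0 < a) (hG : ∀ y, a * ‖y‖ ≤ G y) (α : E) :
    asymDual G α ≤ ‖α‖ / a :=
  Real.sSup_le (by rintro _ ⟨y, hy, rfl⟩; exact inner_le_div_of_le_one ha hG α hy)
    (by positivity)

theorem asymDual_nonneg (hG : G 0 ≤ 1) (α : E) : 0 ≤ asymDual G α :=
  Real.sSup_nonneg' ⟨0, ⟨0, hG, inner_zero_right α⟩, le_rfl⟩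

theorem asymDual_le_mul {α : E} (hH : PosHomogeneous H)
    (hbdd : BddAbove ((fun y => ⟪α, y⟫) '' {y | H y ≤ 1})) {l : ℝ} (hl : 0 < l)
    (hHG : ∀ y, H y ≤ l * G y) : asymDual G α ≤ l * asymDual H α := by
  refine Real.sSup_le ?_ (mul_nonneg hl.le (asymDual_nonneg (hH.map_zero.trans_le zero_le_one) α))
  rintro _ ⟨y, hy, rfl⟩
  have hy' : H (l⁻¹ • y) ≤ 1 := by
    rw [hH _ (inv_pos.mpr hl), inv_mul_le_iff₀ hl]
    exact (hHG y).trans (by simpa using mul_le_mul_of_nonneg_left (hy : G y ≤ 1) hl.le)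
  have h : ⟪α, l⁻¹ • y⟫ ≤ asymDual H α := le_csSup hbdd ⟨_, hy', rfl⟩
  rw [real_inner_smul_right] at h
  calc ⟪α, y⟫ = l * (l⁻¹ * ⟪α, y⟫) := (mul_inv_cancel_left₀ hl.ne' _).symm
    _ ≤ l * asymDual H α := mul_le_mul_of_nonneg_left h hl.le

theorem asymDual_le_add {K : ℝ} (ha : 0 < a) (hK : 0 ≤ K) (hG : ∀ y, a * ‖y‖ ≤ G y)
    (hH : ∀ y, a * ‖y‖ ≤ H y) (hHhom : PosHomogeneous H)
    (hHG : ∀ y, H y ≤ G y + K * ‖y‖) (α : E) :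
    asymDual G α ≤ asymDual H α + K / a ^ 2 * ‖α‖ := by
  have hHG' : ∀ y, H y ≤ (1 + K / a) * G y := fun y =>
    calc H y ≤ G y + K * ‖y‖ := hHG y
      _ = G y + K / a * (a * ‖y‖) := by field_simp
      _ ≤ (1 + K / a) * G y := by nlinarith [hG y, div_nonneg hK ha.le]
  calc asymDual G α ≤ (1 + K / a) * asymDual H α :=
        asymDual_le_mul hHhom (bddAbove_inner_image ha hH α) (by positivity) hHG'
    _ = asymDual H α + K / a * asymDual H α := by ring
    _ ≤ asymDual H α + K / a * (‖α‖ / a) := by gcongr; exact asymDual_le_div ha hH α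
    _ = asymDual H α + K / a ^ 2 * ‖α‖ := by ring

theorem abs_asymDual_sub_le {K : ℝ} (ha : 0 < a) (hK : 0 ≤ K) (hG : ∀ y, a * ‖y‖ ≤ G y)
    (hH : ∀ y, a * ‖y‖ ≤ H y) (hGhom : PosHomogeneous G) (hHhom : PosHomogeneous H)
    (hGH : ∀ y, |G y - H y| ≤ K * ‖y‖) (α : E) :
    |asymDual G α - asymDual H α| ≤ K / a ^ 2 * ‖α‖ := by
  have h₁ := asymDual_le_add ha hK hG hH hHhom (fun y => by linarith [(abs_le.mp (hGH y)).1]) α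
  have h₂ := asymDual_le_add ha hK hH hG hGhom (fun y => by linarith [(abs_le.mp (hGH y)).2]) α
  rw [abs_sub_le_iff]
  constructor <;> linarith

end AsymDual

section Family

variable {X E : Type*} [NormedAddCommGroup E] [NormedSpace ℝ E] [ProperSpace E]
  {F : X → E → ℝ} {K : Set X}

theorem IsCompact.exists_pos_forall_mul_norm_le [TopologicalSpace X] (hK : IsCompact K)
    (hcont : ContinuousOn (fun p : X × E => F p.1 p.2) (K ×ˢ univ))
    (hpos : ∀ x ∈ K, ∀ y ≠ 0, 0 < F x y) (hhom : ∀ x ∈ K, PosHomogeneous (F x)) :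
    ∃ a > 0, ∀ x ∈ K, ∀ y, a * ‖y‖ ≤ F x y := by
  obtain ⟨a, ha, hmin⟩ := (hK.prod (isCompact_sphere (0 : E) 1)).exists_forall_le'
    (hcont.mono (prod_mono subset_rfl (subset_univ _)))
    (fun p hp => hpos p.1 hp.1 p.2 (ne_zero_of_mem_unit_sphere ⟨p.2, hp.2⟩))
  exact ⟨a, ha, fun x hx => (hhom x hx).mul_norm_le fun u hu => hmin (x, u) ⟨hx, hu⟩⟩

theorem IsCompact.exists_abs_sub_le_mul_norm_mul_norm [NormedAddCommGroup X] [NormedSpace ℝ X]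
    {DF : X × E → (X →L[ℝ] ℝ)} (hK : IsCompact K) (hKconv : Convex ℝ K)
    (hDF : ∀ x ∈ K, ∀ y, HasFDerivAt (fun x' => F x' y) (DF (x, y)) x)
    (hDFcont : ContinuousOn DF (K ×ˢ univ)) (hhom : ∀ x ∈ K, PosHomogeneous (F x)) :
    ∃ M ≥ 0, ∀ x₁ ∈ K, ∀ x₂ ∈ K, ∀ y,
      |F x₁ y - F x₂ y| ≤ M * ‖x₁ - x₂‖ * ‖y‖ := by
  obtain ⟨M, hM⟩ := (hK.prod (isCompact_sphere (0 : E) 1)).exists_bound_of_continuousOn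
    (hDFcont.mono (prod_mono subset_rfl (subset_univ _)))
  refine ⟨max M 0, le_max_right _ _, fun x₁ hx₁ x₂ hx₂ =>
    ((hhom x₁ hx₁).sub (hhom x₂ hx₂)).abs_le_mul_norm fun u hu => ?_⟩
  simpa only [Real.norm_eq_abs] using hKconv.norm_image_sub_le_of_norm_hasFDerivWithin_le
    (f := fun x => F x u) (fun x hx => (hDF x hx u).hasFDerivWithinAt)
    (fun x hx => (hM (x, u) ⟨hx, hu⟩).trans (le_max_left _ _)) hx₂ hx₁

end Family

theorem dual_family_horizontal_lipschitz_general {n : ℕ} (U Ut : Set (En n))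
    (hUconv : Convex ℝ U)
    (hcomp : IsCompact (closure U)) (hsub : closure U ⊆ Ut)
    (F : En n → En n → ℝ) (hF : HorizC1Family Ut F) :
    ∃ C₁ > (0 : ℝ), ∀ α : En n, ∀ x₁ ∈ U, ∀ x₂ ∈ U,
      |dualNormF F x₁ α - dualNormF F x₂ α| ≤ C₁ * ‖α‖ * ‖x₁ - x₂‖ := by
  obtain ⟨hcont, hnorm, DF, hDF, hDFcont⟩ := hF
  have hhom : ∀ x ∈ closure U, PosHomogeneous (F x) :=
    fun x hx => (hnorm x (hsub hx)).posHomogeneous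
  obtain ⟨a, ha, hcoer⟩ := hcomp.exists_pos_forall_mul_norm_le
    (hcont.mono (prod_mono hsub subset_rfl)) (fun x hx _ => (hnorm x (hsub hx)).pos) hhom
  obtain ⟨M, hM, hlip⟩ := hcomp.exists_abs_sub_le_mul_norm_mul_norm hUconv.closure
    (fun x hx => hDF x (hsub hx)) (hDFcont.mono (prod_mono hsub subset_rfl)) hhom
  refine ⟨M / a ^ 2 + 1, by positivity, fun α x₁ hx₁ x₂ hx₂ => ?_⟩
  have hx₁' := subset_closure hx₁
  have hx₂' := subset_closure hx₂
  rw [dualNormF_eq_asymDual, dualNormF_eq_asymDual]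
  calc _ ≤ M * ‖x₁ - x₂‖ / a ^ 2 * ‖α‖ :=
        abs_asymDual_sub_le ha (by positivity) (hcoer x₁ hx₁') (hcoer x₂ hx₂')
          (hhom x₁ hx₁') (hhom x₂ hx₂') (hlip x₁ hx₁' x₂ hx₂') α
    _ ≤ (M / a ^ 2 + 1) * ‖α‖ * ‖x₁ - x₂‖ := by
      rw [mul_div_right_comm, mul_right_comm]
      gcongr
      linarith

/-- Horizontal Lipschitz estimate for the family of dual norms. -/
theorem dual_family_horizontal_lipschitz {n : ℕ} (U Ut : Set (En n))
    (hU : IsOpen U) (hUt : IsOpen Ut) (hUconv : Convex ℝ U)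
    (hcomp : IsCompact (closure U)) (hsub : closure U ⊆ Ut)
    (F : En n → En n → ℝ) (hF : HorizC1Family Ut F) :
    ∃ C₁ > (0 : ℝ), ∀ α : En n, ∀ x₁ ∈ U, ∀ x₂ ∈ U,
      |dualNormF F x₁ α - dualNormF F x₂ α| ≤ C₁ * ‖α‖ * ‖x₁ - x₂‖ :=
  dual_family_horizontal_lipschitz_general U Ut hUconv hcomp hsub F hF
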